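/- Let Σ be a 2-chromatic signed simple graph (χ(Σ) = 2). Then M(Σ) = m(Σ) = 0 if and only if Σ contains at least one positive edge. -/

import Mathlib

/-- A signed simple graph: two edge-disjoint simple graphs on the same vertex set,
the positive edges and the negative edges. -/
structure SignedGraph (V : Type*) where
  pos : SimpleGraph V
  neg : SimpleGraph V
  disjoint : ∀ a b : V, ¬ (pos.Adj a b ∧ neg.Adj a b)

/-- The color set of size `n`: `{±1, …, ±k}` if `n = 2k`, and `{0, ±1, …, ±k}` if `n = 2k+1`. -/
noncomputable def signedColorSet (n : ℕ) : Finset ℤ :=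
  if Even n then (Finset.Icc (-((n / 2 : ℕ) : ℤ)) ((n / 2 : ℕ) : ℤ)).erase 0
  else Finset.Icc (-((n / 2 : ℕ) : ℤ)) ((n / 2 : ℕ) : ℤ)

/-- A proper coloration of a signed graph using the color set of size `n`. -/
def IsProperColoration {V : Type*} (S : SignedGraph V) (n : ℕ) (κ : V → ℤ) : Prop :=
  (∀ v, κ v ∈ signedColorSet n) ∧
  (∀ a b, S.pos.Adj a b → κ a ≠ κ b) ∧
  (∀ a b, S.neg.Adj a b → κ a ≠ -κ b)

/-- The chromatic number: the least size of a color set admitting a proper coloration. -/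
noncomputable def sChromaticNumber {V : Type*} (S : SignedGraph V) : ℕ :=
  sInf {n : ℕ | ∃ κ : V → ℤ, IsProperColoration S n κ}

/-- A minimal coloration: a proper coloration using the color set of size `χ(Σ)`. -/
def IsMinimalColoration {V : Type*} (S : SignedGraph V) (κ : V → ℤ) : Prop :=
  IsProperColoration S (sChromaticNumber S) κ

/-- The deficiency of a coloration: the number of unused colors from the color set of size `n`. -/
noncomputable def sDeficiency {V : Type*} [Fintype V] (n : ℕ) (κ : V → ℤ) : ℕ :=
  (signedColorSet n \ Finset.image κ Finset.univ).card

/-- Maximum deficiency over minimal colorations. -/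
noncomputable def maxDef {V : Type*} [Fintype V] (S : SignedGraph V) : ℕ :=
  sSup {d : ℕ | ∃ κ : V → ℤ, IsMinimalColoration S κ ∧ sDeficiency (sChromaticNumber S) κ = d}

/-- Minimum deficiency over minimal colorations. -/
noncomputable def minDef {V : Type*} [Fintype V] (S : SignedGraph V) : ℕ :=
  sInf {d : ℕ | ∃ κ : V → ℤ, IsMinimalColoration S κ ∧ sDeficiency (sChromaticNumber S) κ = d}

/-- A stable cover of the positive edges: a vertex cover of `E⁺` that is stable in `Σ`. -/
def IsStableCover {V : Type*} (S : SignedGraph V) (T : Set V) : Prop :=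
  (∀ a b, S.pos.Adj a b → a ∈ T ∨ b ∈ T) ∧
  (∀ a ∈ T, ∀ b ∈ T, ¬ S.pos.Adj a b ∧ ¬ S.neg.Adj a b)

/-- An edge `ab` has exactly one endpoint in `A`. -/
def crossing {V : Type*} (A : Set V) (a b : V) : Prop := ¬ ((a ∈ A) ↔ (b ∈ A))

/-- Switching a signed graph at a vertex set `A`: the sign of every edge with exactly one
endpoint in `A` is negated. -/
def SignedGraph.switch {V : Type*} (S : SignedGraph V) (A : Set V) : SignedGraph V where
  pos :=
    { Adj := fun a b => (S.pos.Adj a b ∧ ¬ crossing A a b) ∨ (S.neg.Adj a b ∧ crossing A a b)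
      symm := by
        constructor
        intro a b h
        unfold crossing at *
        rcases h with ⟨h1, h2⟩ | ⟨h1, h2⟩
        · exact Or.inl ⟨S.pos.adj_symm h1, by tauto⟩
        · exact Or.inr ⟨S.neg.adj_symm h1, by tauto⟩
      loopless := by
        constructor
        intro a h
        rcases h with ⟨h1, _⟩ | ⟨_, h2⟩
        · exact S.pos.loopless.irrefl a h1
        · exact h2 Iff.rfl }
  neg :=
    { Adj := fun a b => (S.neg.Adj a b ∧ ¬ crossing A a b) ∨ (S.pos.Adj a b ∧ crossing A a b)
      symm := by
        constructor
        intro a b h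
        unfold crossing at *
        rcases h with ⟨h1, h2⟩ | ⟨h1, h2⟩
        · exact Or.inl ⟨S.neg.adj_symm h1, by tauto⟩
        · exact Or.inr ⟨S.pos.adj_symm h1, by tauto⟩
      loopless := by
        constructor
        intro a h
        rcases h with ⟨h1, _⟩ | ⟨_, h2⟩
        · exact S.neg.loopless.irrefl a h1
        · exact h2 Iff.rfl }
  disjoint := by
    intro a b h
    have := S.disjoint a b
    tauto

/-- General proper coloration with an arbitrary color set `C ⊆ ℤ`. -/
def IsProperWith {V : Type*} (S : SignedGraph V) (C : Set ℤ) (κ : V → ℤ) : Prop :=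
  (∀ v, κ v ∈ C) ∧
  (∀ a b, S.pos.Adj a b → κ a ≠ κ b) ∧
  (∀ a b, S.neg.Adj a b → κ a ≠ -κ b)

open Classical in
/-- The coloration switching equivalent to `κ` via `A`: negate the colors on `A`. -/
noncomputable def switchColor {V : Type*} (A : Set V) (κ : V → ℤ) : V → ℤ :=
  fun v => if v ∈ A then -κ v else κ v

/-- The adjacency of the forcing graph `F(Σ)` for the matching `m`:
a directed edge from `x` to `y` whenever `x ȳ` is a negative edge. -/
def ForcingAdj {V : Type*} (S : SignedGraph V) (m : V → V) (x y : V) : Prop :=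
  S.neg.Adj x (m y)

/-! With only the two colors `±1` available, a positive edge forces both of them to appear,
while without positive edges the constant coloration `1` is proper and misses `-1`. -/

lemma signedColorSet_two : signedColorSet 2 = {-1, 1} := by decide

section

variable {V : Type*} (S : SignedGraph V)

lemma sChromaticNumber_eq_zero_of_isEmpty [IsEmpty V] : sChromaticNumber S = 0 :=
  Nat.sInf_eq_zero.mpr <| Or.inl
    ⟨fun _ => 0, isEmptyElim, fun a _ _ => isEmptyElim a, fun a _ _ => isEmptyElim a⟩

lemma nonempty_of_sChromaticNumber_ne_zero (h : sChromaticNumber S ≠ 0) : Nonempty V :=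
  not_isEmpty_iff.mp fun _ => h (sChromaticNumber_eq_zero_of_isEmpty S)

lemma exists_isMinimalColoration (h : sChromaticNumber S ≠ 0) :
    ∃ κ, IsMinimalColoration S κ :=
  Nat.sInf_mem (Nat.nonempty_of_pos_sInf (Nat.pos_of_ne_zero h))

lemma isProperColoration_const {n : ℕ} {c : ℤ} (hc : c ∈ signedColorSet n) (hc₀ : c ≠ 0)
    (hS : ∀ a b, ¬ S.pos.Adj a b) : IsProperColoration S n (fun _ => c) :=
  ⟨fun _ => hc, fun a b hab => (hS a b hab).elim, fun _ _ _ => by dsimp only; omega⟩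

end

section

variable {V : Type*} [Fintype V]

lemma sDeficiency_le_card (n : ℕ) (κ : V → ℤ) : sDeficiency n κ ≤ (signedColorSet n).card :=
  Finset.card_le_card Finset.sdiff_subset

lemma sDeficiency_eq_zero_iff {n : ℕ} {κ : V → ℤ} :
    sDeficiency n κ = 0 ↔ signedColorSet n ⊆ Finset.image κ Finset.univ := by
  rw [sDeficiency, Finset.card_eq_zero, Finset.sdiff_eq_empty_iff_subset]

lemma sDeficiency_const [Nonempty V] {n : ℕ} {c : ℤ} (hc : c ∈ signedColorSet n) :
    sDeficiency n (fun _ : V => c) = (signedColorSet n).card - 1 := by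
  rw [sDeficiency, Finset.image_const Finset.univ_nonempty, Finset.sdiff_singleton_eq_erase,
    Finset.card_erase_of_mem hc]

lemma sDeficiency_two_eq_zero_of_pos_adj {S : SignedGraph V} {κ : V → ℤ}
    (hκ : IsProperColoration S 2 κ) {a b : V} (hab : S.pos.Adj a b) : sDeficiency 2 κ = 0 := by
  obtain ⟨hmem, hpos, -⟩ := hκ
  have ha := hmem a
  have hb := hmem b
  have hne := hpos a b hab
  rw [sDeficiency_eq_zero_iff]
  intro x hx
  rw [signedColorSet_two] at ha hb hx
  simp only [Finset.mem_insert, Finset.mem_singleton] at ha hb hx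
  have hx' : x = κ a ∨ x = κ b := by omega
  rcases hx' with rfl | rfl <;> exact Finset.mem_image_of_mem _ (Finset.mem_univ _)

variable (S : SignedGraph V)

lemma bddAbove_deficiencies : BddAbove
    {d : ℕ | ∃ κ : V → ℤ, IsMinimalColoration S κ ∧ sDeficiency (sChromaticNumber S) κ = d} :=
  ⟨_, by rintro d ⟨κ, -, rfl⟩; exact sDeficiency_le_card _ κ⟩

lemma sDeficiency_le_maxDef {κ : V → ℤ} (hκ : IsMinimalColoration S κ) :
    sDeficiency (sChromaticNumber S) κ ≤ maxDef S :=
  le_csSup (bddAbove_deficiencies S) ⟨κ, hκ, rfl⟩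

lemma maxDef_eq_zero_and_minDef_eq_zero (hex : ∃ κ, IsMinimalColoration S κ)
    (hzero : ∀ κ, IsMinimalColoration S κ → sDeficiency (sChromaticNumber S) κ = 0) :
    maxDef S = 0 ∧ minDef S = 0 := by
  have hD : {d : ℕ | ∃ κ : V → ℤ,
      IsMinimalColoration S κ ∧ sDeficiency (sChromaticNumber S) κ = d} = {0} := by
    obtain ⟨κ₀, hκ₀⟩ := hex
    ext d
    constructor
    · rintro ⟨κ, hκ, rfl⟩
      exact hzero κ hκ
    · rintro rfl
      exact ⟨κ₀, hκ₀, hzero κ₀ hκ₀⟩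
  rw [maxDef, minDef, hD, csSup_singleton, csInf_singleton]
  exact ⟨rfl, rfl⟩

end

/-- For a 2-chromatic signed simple graph,
`M(Σ) = m(Σ) = 0` iff `Σ` contains at least one positive edge. -/
theorem two_chromatic_def_zero {V : Type*} [Fintype V] (S : SignedGraph V)
    (h : sChromaticNumber S = 2) :
    (maxDef S = 0 ∧ minDef S = 0) ↔ (∃ a b : V, S.pos.Adj a b) := by
  have hχ : sChromaticNumber S ≠ 0 := by omega
  have h1 : (1 : ℤ) ∈ signedColorSet 2 := by simp [signedColorSet_two]
  constructor
  · rintro ⟨hM, -⟩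
    by_contra! hS
    have := nonempty_of_sChromaticNumber_ne_zero S hχ
    have hκ : IsMinimalColoration S (fun _ => 1) := by
      rw [IsMinimalColoration, h]
      exact isProperColoration_const S h1 one_ne_zero hS
    have hle := sDeficiency_le_maxDef S hκ
    rw [h, sDeficiency_const h1, hM, signedColorSet_two] at hle
    simp at hle
  · rintro ⟨a, b, hab⟩
    refine maxDef_eq_zero_and_minDef_eq_zero S (exists_isMinimalColoration S hχ) fun κ hκ => ?_
    rw [IsMinimalColoration, h] at hκ
    rw [h]
    exact sDeficiency_two_eq_zero_of_pos_adj hκ hab
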